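/- In any inverse category with a disjointness tensor, ∐ⱼ† ∘ ∐ᵢ = id if i = j and ∐ⱼ† ∘ ∐ᵢ = 0 if i ≠ j, for the quasi-injections ∐₁ : A → A ⊕ B, ∐₂ : B → A ⊕ B. -/

import Mathlib

open CategoryTheory

universe v u

/-- A restriction category: a category equipped with a combinator assigning to each
morphism `f : A ⟶ B` a restriction idempotent `rest f : A ⟶ A` satisfying the four
restriction axioms. (Note: `f ≫ g` denotes `g ∘ f`.) -/
class RestrictionCategory (C : Type u) [Category.{v} C] where
  rest : ∀ {A B : C}, (A ⟶ B) → (A ⟶ A)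
  /-- (R1) f ∘ \overline{f} = f -/
  comp_rest : ∀ {A B : C} (f : A ⟶ B), rest f ≫ f = f
  /-- (R2) \overline{g} ∘ \overline{f} = \overline{f} ∘ \overline{g} -/
  rest_comm : ∀ {A B B' : C} (f : A ⟶ B) (g : A ⟶ B'), rest f ≫ rest g = rest g ≫ rest f
  /-- (R3) \overline{f ∘ \overline{g}} = \overline{f} ∘ \overline{g} -/
  rest_comp_rest : ∀ {A B B' : C} (f : A ⟶ B) (g : A ⟶ B'),
    rest (rest g ≫ f) = rest g ≫ rest f
  /-- (R4) \overline{g} ∘ f = f ∘ \overline{g ∘ f} -/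
  rest_swap : ∀ {A B B' : C} (f : A ⟶ B) (g : B ⟶ B'),
    f ≫ rest g = rest (f ≫ g) ≫ f

open RestrictionCategory

/-- An inverse category: a restriction category in which every morphism is a partial
isomorphism, with `dag f` its (necessarily unique) partial inverse. -/
class InverseCategory (C : Type u) [Category.{v} C] extends RestrictionCategory C where
  dag : ∀ {A B : C}, (A ⟶ B) → (B ⟶ A)
  /-- f† ∘ f = \overline{f} -/
  comp_dag : ∀ {A B : C} (f : A ⟶ B), f ≫ dag f = rest f
  /-- f ∘ f† = \overline{f†} -/
  dag_comp : ∀ {A B : C} (f : A ⟶ B), dag f ≫ f = rest (dag f)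

open InverseCategory

open Limits MonoidalCategory

variable (C : Type u) [Category.{v} C] [MonoidalCategory C] [SymmetricCategory C]
  [HasZeroMorphisms C] [RestrictionCategory C]

/-- The first quasi-injection ∐₁ = (id ⊕ 0) ∘ ρ⁻¹ : A → A ⊕ B of a disjointness tensor
(writing the tensor as ⊗). -/
def qinl (A B : C) : A ⟶ A ⊗ B := (ρ_ A).inv ≫ (𝟙 A ⊗ₘ (0 : (𝟙_ C) ⟶ B))

/-- The second quasi-injection ∐₂ = (0 ⊕ id) ∘ λ⁻¹ : B → A ⊕ B. -/
def qinr (A B : C) : B ⟶ A ⊗ B := (λ_ B).inv ≫ ((0 : (𝟙_ C) ⟶ A) ⊗ₘ 𝟙 B)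

/-- A disjointness tensor on a restriction category: a symmetric monoidal restriction
functor `⊗` whose unit is the restriction zero object, and whose quasi-injections are
jointly epic. -/
class DisjointnessTensor : Prop where
  /-- The monoidal unit is a zero object. -/
  unit_isZero : IsZero (𝟙_ C)
  /-- The zero object is a restriction zero. -/
  rest_zero : ∀ A : C, rest (0 : A ⟶ A) = (0 : A ⟶ A)
  /-- The tensor is a restriction functor. -/
  rest_tensor : ∀ {A B A' B' : C} (f : A ⟶ B) (g : A' ⟶ B'),
    rest (f ⊗ₘ g) = rest f ⊗ₘ rest g
  /-- The quasi-injections are jointly epic. -/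
  jointly_epic : ∀ {A B X : C} (f g : A ⊗ B ⟶ X),
    qinl C A B ≫ f = qinl C A B ≫ g → qinr C A B ≫ f = qinr C A B ≫ g → f = g

open InverseCategory

section Aux

variable {D : Type u} [Category.{v} D] [RestrictionCategory D]

lemma rest_id' (A : D) : rest (𝟙 A) = 𝟙 A := by
  have := comp_rest (𝟙 A)
  simpa using this

lemma rest_comp_left {A B B' : D} (f : A ⟶ B) (g : B ⟶ B') :
    rest f ≫ rest (f ≫ g) = rest (f ≫ g) := by
  conv_rhs => rw [show f ≫ g = rest f ≫ (f ≫ g) by rw [← Category.assoc, comp_rest]]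
  rw [rest_comp_rest]

lemma rest_comp_right {A B B' : D} (f : A ⟶ B) (g : B ⟶ B') :
    rest (f ≫ g) ≫ rest f = rest (f ≫ g) := by
  rw [rest_comm, rest_comp_left]

lemma rest_comp' {A B B' : D} (f : A ⟶ B) (g : B ⟶ B') :
    rest (f ≫ rest g) = rest (f ≫ g) := by
  rw [rest_swap, rest_comp_rest, rest_comp_right]

lemma rest_of_section {A B : D} (f : A ⟶ B) (g : B ⟶ A) (h : f ≫ g = 𝟙 A) :
    rest f = 𝟙 A := by
  have h1 : rest (f ≫ g) = 𝟙 A := by rw [h, rest_id']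
  have := rest_comp_right f g
  rw [h1, Category.id_comp] at this
  exact this

end Aux

section AuxInv

variable {D : Type u} [Category.{v} D] [InverseCategory D]

lemma dag_unique {A B : D} (f : A ⟶ B) (g : B ⟶ A)
    (h1 : f ≫ g = rest f) (h2 : g ≫ f = rest g) : dag f = g := by
  set g₁ := dag f with hg1
  have hfg1 : f ≫ g₁ = rest f := comp_dag f
  have hg1f : g₁ ≫ f = rest g₁ := dag_comp f
  -- g₁ = rest g₁ ≫ g
  have e1 : g₁ = rest g₁ ≫ g := by
    calc g₁ = rest g₁ ≫ g₁ := (comp_rest g₁).symm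
    _ = g₁ ≫ f ≫ g₁ := by rw [← Category.assoc, hg1f]
    _ = g₁ ≫ rest f := by rw [hfg1]
    _ = g₁ ≫ f ≫ g := by rw [h1]
    _ = rest g₁ ≫ g := by rw [← Category.assoc, hg1f]
  have e2 : g = rest g ≫ g₁ := by
    calc g = rest g ≫ g := (comp_rest g).symm
    _ = g ≫ f ≫ g := by rw [← Category.assoc, h2]
    _ = g ≫ rest f := by rw [h1]
    _ = g ≫ f ≫ g₁ := by rw [hfg1]
    _ = rest g ≫ g₁ := by rw [← Category.assoc, h2]
  have r1 : rest g₁ = rest g₁ ≫ rest g := by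
    conv_lhs => rw [e1]
    rw [rest_comp_rest]
  have r2 : rest g = rest g ≫ rest g₁ := by
    conv_lhs => rw [e2]
    rw [rest_comp_rest]
  have req : rest g₁ = rest g := by
    rw [r1, rest_comm, ← r2]
  calc g₁ = rest g₁ ≫ g := e1
  _ = rest g ≫ g := by rw [req]
  _ = g := comp_rest g

end AuxInv

section AuxZero

variable {D : Type u} [Category.{v} D] [MonoidalCategory D] [HasZeroMorphisms D]

lemma zero_tensor_zero (hz : IsZero (𝟙_ D)) {A B : D}
    (f : A ⟶ 𝟙_ D) (g : (𝟙_ D) ⟶ B) : f ⊗ₘ g = 0 := by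
  have hz2 : IsZero ((𝟙_ D) ⊗ (𝟙_ D)) := hz.of_iso (λ_ (𝟙_ D))
  have hf : (f ⊗ₘ 𝟙 (𝟙_ D)) = (0 : A ⊗ (𝟙_ D) ⟶ (𝟙_ D) ⊗ (𝟙_ D)) :=
    hz2.eq_of_tgt _ _
  calc f ⊗ₘ g = (f ≫ 𝟙 (𝟙_ D)) ⊗ₘ (𝟙 (𝟙_ D) ≫ g) := by simp
  _ = (f ⊗ₘ 𝟙 (𝟙_ D)) ≫ (𝟙 (𝟙_ D) ⊗ₘ g) := by rw [← MonoidalCategory.tensorHom_comp_tensorHom]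
  _ = 0 := by rw [hf, zero_comp]

lemma zero_tensor_zero' (hz : IsZero (𝟙_ D)) {A B : D}
    (g : (𝟙_ D) ⟶ A) (f : B ⟶ 𝟙_ D) : g ⊗ₘ f = 0 := by
  have hz2 : IsZero ((𝟙_ D) ⊗ (𝟙_ D)) := hz.of_iso (λ_ (𝟙_ D))
  have hf : (𝟙 (𝟙_ D) ⊗ₘ f) = (0 : (𝟙_ D) ⊗ B ⟶ (𝟙_ D) ⊗ (𝟙_ D)) :=
    hz2.eq_of_tgt _ _
  calc g ⊗ₘ f = (𝟙 (𝟙_ D) ≫ g) ⊗ₘ (f ≫ 𝟙 (𝟙_ D)) := by simp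
  _ = (𝟙 (𝟙_ D) ⊗ₘ f) ≫ (g ⊗ₘ 𝟙 (𝟙_ D)) := by rw [← MonoidalCategory.tensorHom_comp_tensorHom]
  _ = 0 := by rw [hf, zero_comp]

end AuxZero

section AuxDT

variable {C : Type u} [Category.{v} C] [MonoidalCategory C]
  [SymmetricCategory C] [HasZeroMorphisms C] [InverseCategory C] [DisjointnessTensor C]

lemma rest_comp_of_rest_id {A B B' : C} (f : A ⟶ B) (g : B ⟶ B')
    (h : rest g = 𝟙 B) : rest (f ≫ g) = rest f := by
  rw [← rest_comp', h]
  simp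

lemma rest_iso {A B : C} (e : A ≅ B) : rest e.hom = 𝟙 A :=
  rest_of_section e.hom e.inv e.hom_inv_id

lemma rest_iso_inv {A B : C} (e : A ≅ B) : rest e.inv = 𝟙 B :=
  rest_of_section e.inv e.hom e.inv_hom_id

lemma rest_from_unit {A : C} (f : (𝟙_ C) ⟶ A) : rest f = 𝟙 (𝟙_ C) :=
  (DisjointnessTensor.unit_isZero (C := C)).eq_of_src _ _

lemma rest_to_unit {A : C} (f : A ⟶ (𝟙_ C)) : rest f = 0 := by
  have h : rest (f ≫ (0 : (𝟙_ C) ⟶ A)) = rest f := by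
    rw [← rest_comp', rest_from_unit]
    simp
  have h2 : f ≫ (0 : (𝟙_ C) ⟶ A) = (0 : A ⟶ A) := comp_zero
  rw [← h, h2, DisjointnessTensor.rest_zero]

lemma unit_endo_eq_id (f : (𝟙_ C) ⟶ (𝟙_ C)) : f = 𝟙 (𝟙_ C) :=
  (DisjointnessTensor.unit_isZero (C := C)).eq_of_src _ _

lemma rest_qinl (A B : C) : rest (qinl C A B) = 𝟙 A := by
  unfold qinl
  rw [rest_comp_of_rest_id _ _ (by
    rw [DisjointnessTensor.rest_tensor, rest_id', rest_from_unit,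
      MonoidalCategory.id_tensorHom_id]), rest_iso_inv]

lemma rest_qinr (A B : C) : rest (qinr C A B) = 𝟙 B := by
  unfold qinr
  rw [rest_comp_of_rest_id _ _ (by
    rw [DisjointnessTensor.rest_tensor, rest_id', rest_from_unit,
      MonoidalCategory.id_tensorHom_id]), rest_iso_inv]

lemma dag_qinl (A B : C) :
    dag (qinl C A B) = (𝟙 A ⊗ₘ (0 : B ⟶ 𝟙_ C)) ≫ (ρ_ A).hom := by
  apply dag_unique
  · -- qinl ≫ g = rest qinl
    rw [rest_qinl]
    unfold qinl
    rw [Category.assoc, ← Category.assoc (𝟙 A ⊗ₘ _), MonoidalCategory.tensorHom_comp_tensorHom]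
    rw [unit_endo_eq_id ((0 : (𝟙_ C) ⟶ B) ≫ (0 : B ⟶ 𝟙_ C))]
    simp [MonoidalCategory.id_tensorHom_id]
  · -- g ≫ qinl = rest g
    unfold qinl
    rw [Category.assoc, Iso.hom_inv_id_assoc, MonoidalCategory.tensorHom_comp_tensorHom]
    rw [rest_comp_of_rest_id _ _ (rest_iso (ρ_ A)),
      DisjointnessTensor.rest_tensor, rest_id', rest_to_unit]
    simp

lemma dag_qinr (A B : C) :
    dag (qinr C A B) = ((0 : A ⟶ 𝟙_ C) ⊗ₘ 𝟙 B) ≫ (λ_ B).hom := by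
  apply dag_unique
  · rw [rest_qinr]
    unfold qinr
    rw [Category.assoc, ← Category.assoc (_ ⊗ₘ 𝟙 B), MonoidalCategory.tensorHom_comp_tensorHom]
    rw [unit_endo_eq_id ((0 : (𝟙_ C) ⟶ A) ≫ (0 : A ⟶ 𝟙_ C))]
    simp [MonoidalCategory.id_tensorHom_id]
  · unfold qinr
    rw [Category.assoc, Iso.hom_inv_id_assoc, MonoidalCategory.tensorHom_comp_tensorHom]
    rw [rest_comp_of_rest_id _ _ (rest_iso (λ_ B)),
      DisjointnessTensor.rest_tensor, rest_id', rest_to_unit]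
    simp

end AuxDT

/-- In any inverse category with a disjointness tensor, ∐ⱼ† ∘ ∐ᵢ = id if i = j and
∐ⱼ† ∘ ∐ᵢ = 0 if i ≠ j. -/
theorem dag_qin_comp_qin {C : Type u} [Category.{v} C] [MonoidalCategory C]
    [SymmetricCategory C] [HasZeroMorphisms C] [InverseCategory C] [DisjointnessTensor C]
    (A B : C) :
    qinl C A B ≫ dag (qinl C A B) = 𝟙 A ∧
    qinr C A B ≫ dag (qinr C A B) = 𝟙 B ∧
    qinl C A B ≫ dag (qinr C A B) = (0 : A ⟶ B) ∧
    qinr C A B ≫ dag (qinl C A B) = (0 : B ⟶ A) := by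
  refine ⟨?_, ?_, ?_, ?_⟩
  · rw [comp_dag, rest_qinl]
  · rw [comp_dag, rest_qinr]
  · rw [dag_qinr]
    unfold qinl
    rw [Category.assoc, ← Category.assoc (𝟙 A ⊗ₘ _), MonoidalCategory.tensorHom_comp_tensorHom]
    have : (𝟙 A ≫ (0 : A ⟶ 𝟙_ C)) ⊗ₘ ((0 : (𝟙_ C) ⟶ B) ≫ 𝟙 B) = 0 := by
      simpa using zero_tensor_zero (DisjointnessTensor.unit_isZero (C := C))
        (0 : A ⟶ 𝟙_ C) (0 : (𝟙_ C) ⟶ B)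
    rw [this]
    simp
  · rw [dag_qinl]
    unfold qinr
    rw [Category.assoc, ← Category.assoc (_ ⊗ₘ 𝟙 B), MonoidalCategory.tensorHom_comp_tensorHom]
    have : ((0 : (𝟙_ C) ⟶ A) ≫ 𝟙 A) ⊗ₘ (𝟙 B ≫ (0 : B ⟶ 𝟙_ C)) = 0 := by
      simpa using zero_tensor_zero' (DisjointnessTensor.unit_isZero (C := C))
        (0 : (𝟙_ C) ⟶ A) (0 : B ⟶ 𝟙_ C)
    rw [this]
    simp
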